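/- For every shape parameter λ > 0, the Mills ratio of the skew normal distribution satisfies x · (1 - F_λ(x)) / f_λ(x) → 1 as x → ∞. -/

import Mathlib

open Real MeasureTheory Filter Topology

/-- Standard normal density. -/
noncomputable def stdPhi (x : ℝ) : ℝ := (Real.sqrt (2 * Real.pi))⁻¹ * Real.exp (-(x ^ 2) / 2)

/-- Standard normal cdf. -/
noncomputable def stdCdf (x : ℝ) : ℝ := ∫ t in Set.Iic x, stdPhi t

/-- Skew normal density with shape parameter l. -/
noncomputable def snPdf (l x : ℝ) : ℝ := 2 * stdPhi x * stdCdf (l * x)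

/-- Skew normal cdf with shape parameter l. -/
noncomputable def snCdf (l x : ℝ) : ℝ := ∫ t in Set.Iic x, snPdf l t

/-- Gumbel extreme value distribution function. -/
noncomputable def gumbel (x : ℝ) : ℝ := Real.exp (-Real.exp (-x))

/-!
For `x > 0` and `t ≥ x` we have `Φ(λx) ≤ Φ(λt) ≤ 1`, so the skew normal tail satisfies
`2 Φ(λx) Φ̄(x) ≤ 1 - F_λ(x) ≤ 2 Φ̄(x)`, where `Φ̄ = 1 - Φ`. Since `f_λ(x) = 2 φ(x) Φ(λx)`, the
skew normal Mills ratio lies between the Gaussian one `x Φ̄(x) / φ(x)` and the Gaussian one divided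
by `Φ(λx) → 1`. The Gaussian Mills ratio tends to `1` by the classical bounds
`φ(x) / x ≤ (1 + x⁻²) Φ̄(x)` and `Φ̄(x) ≤ φ(x) / x`, obtained by comparing `φ` on `(x, ∞)` with
`t φ(t) = -φ'(t)` and with `(1 + t⁻²) φ(t) = -(φ(t) / t)'`.
-/

open Set ProbabilityTheory

lemma stdPhi_eq_gaussianPDFReal : stdPhi = gaussianPDFReal 0 1 := by
  ext x; simp [stdPhi, gaussianPDFReal, neg_div]

lemma stdPhi_pos (x : ℝ) : 0 < stdPhi x :=
  stdPhi_eq_gaussianPDFReal ▸ gaussianPDFReal_pos 0 1 x one_ne_zero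

lemma measurable_stdPhi : Measurable stdPhi :=
  stdPhi_eq_gaussianPDFReal ▸ measurable_gaussianPDFReal 0 1

lemma integrable_stdPhi : Integrable stdPhi :=
  stdPhi_eq_gaussianPDFReal ▸ integrable_gaussianPDFReal 0 1

lemma integral_stdPhi : ∫ x, stdPhi x = 1 :=
  stdPhi_eq_gaussianPDFReal ▸ integral_gaussianPDFReal_eq_one 0 one_ne_zero

lemma stdPhi_neg (x : ℝ) : stdPhi (-x) = stdPhi x := by
  simp only [stdPhi, neg_sq]

lemma hasDerivAt_stdPhi (x : ℝ) : HasDerivAt stdPhi (-x * stdPhi x) x := by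
  have h : HasDerivAt (fun t : ℝ => -(t ^ 2) / 2) (-x) x :=
    ((hasDerivAt_pow 2 x).neg.div_const 2).congr_deriv (by ring)
  exact (h.exp.const_mul _).congr_deriv (by rw [stdPhi]; ring)

lemma tendsto_stdPhi_atTop : Tendsto stdPhi atTop (𝓝 0) := by
  have h : Tendsto (fun x : ℝ => -(x ^ 2) / 2) atTop atBot :=
    (tendsto_neg_atTop_atBot.comp (tendsto_pow_atTop two_ne_zero)).atBot_div_const two_pos
  have := (Real.tendsto_exp_atBot.comp h).const_mul (√(2 * π))⁻¹
  rwa [mul_zero] at this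

lemma stdCdf_eq_cdf : stdCdf = cdf (gaussianReal 0 1) := by
  ext x
  rw [cdf_eq_real, measureReal_def, gaussianReal_apply_eq_integral _ one_ne_zero,
    ENNReal.toReal_ofReal (setIntegral_nonneg measurableSet_Iic fun t _ =>
      gaussianPDFReal_nonneg 0 1 t), stdCdf, stdPhi_eq_gaussianPDFReal]

lemma monotone_stdCdf : Monotone stdCdf :=
  stdCdf_eq_cdf ▸ monotone_cdf _

lemma stdCdf_nonneg (x : ℝ) : 0 ≤ stdCdf x :=
  stdCdf_eq_cdf ▸ cdf_nonneg _ x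

lemma stdCdf_le_one (x : ℝ) : stdCdf x ≤ 1 :=
  stdCdf_eq_cdf ▸ cdf_le_one _ x

lemma tendsto_stdCdf_atTop : Tendsto stdCdf atTop (𝓝 1) :=
  stdCdf_eq_cdf ▸ tendsto_cdf_atTop _

noncomputable def stdTail (x : ℝ) : ℝ := ∫ t in Ioi x, stdPhi t

lemma one_sub_stdCdf (x : ℝ) : 1 - stdCdf x = stdTail x := by
  rw [stdCdf, stdTail, ← integral_stdPhi, ← intervalIntegral.integral_Iic_add_Ioi
    integrable_stdPhi.integrableOn integrable_stdPhi.integrableOn]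
  ring

lemma stdCdf_neg (x : ℝ) : stdCdf (-x) = stdTail x := by
  rw [stdCdf, stdTail, ← integral_comp_neg_Ioi]
  simp only [stdPhi_neg]

lemma hasDerivAt_neg_stdPhi (x : ℝ) : HasDerivAt (fun t => -stdPhi t) (x * stdPhi x) x :=
  (hasDerivAt_stdPhi x).neg.congr_deriv (by ring)

lemma tendsto_neg_stdPhi_atTop : Tendsto (fun t => -stdPhi t) atTop (𝓝 0) := by
  simpa using tendsto_stdPhi_atTop.neg

lemma integrableOn_Ioi_mul_stdPhi {x : ℝ} (hx : 0 ≤ x) :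
    IntegrableOn (fun t => t * stdPhi t) (Ioi x) :=
  integrableOn_Ioi_deriv_of_nonneg' (fun t _ => hasDerivAt_neg_stdPhi t)
    (fun t ht => mul_nonneg (hx.trans ht.out.le) (stdPhi_pos t).le) tendsto_neg_stdPhi_atTop

lemma integral_Ioi_mul_stdPhi {x : ℝ} (hx : 0 ≤ x) :
    ∫ t in Ioi x, t * stdPhi t = stdPhi x := by
  rw [integral_Ioi_of_hasDerivAt_of_nonneg' (fun t _ => hasDerivAt_neg_stdPhi t)
    (fun t ht => mul_nonneg (hx.trans ht.out.le) (stdPhi_pos t).le) tendsto_neg_stdPhi_atTop]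
  ring

lemma hasDerivAt_neg_stdPhi_div {x : ℝ} (hx : x ≠ 0) :
    HasDerivAt (fun t => -(stdPhi t / t)) ((1 + x⁻¹ ^ 2) * stdPhi x) x :=
  ((hasDerivAt_stdPhi x).div (hasDerivAt_id x) hx).neg.congr_deriv (by
    simp only [id]; field_simp; ring)

lemma tendsto_neg_stdPhi_div_atTop : Tendsto (fun t => -(stdPhi t / t)) atTop (𝓝 0) := by
  simpa [div_eq_mul_inv] using (tendsto_stdPhi_atTop.mul tendsto_inv_atTop_zero).neg

lemma integral_Ioi_one_add_inv_sq_mul_stdPhi {x : ℝ} (hx : 0 < x) :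
    ∫ t in Ioi x, (1 + t⁻¹ ^ 2) * stdPhi t = stdPhi x / x := by
  rw [integral_Ioi_of_hasDerivAt_of_nonneg'
    (fun _ ht => hasDerivAt_neg_stdPhi_div (hx.trans_le ht).ne')
    (fun t _ => by have := stdPhi_pos t; positivity) tendsto_neg_stdPhi_div_atTop]
  ring

lemma stdTail_le_stdPhi_div {x : ℝ} (hx : 0 < x) : stdTail x ≤ stdPhi x / x := by
  rw [stdTail, ← integral_Ioi_mul_stdPhi hx.le, ← integral_div]
  refine setIntegral_mono_of_nonneg (fun t _ => (stdPhi_pos t).le) (fun t ht => ?_)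
    ((integrableOn_Ioi_mul_stdPhi hx.le).div_const x)
  rw [le_div_iff₀ hx, mul_comm]
  exact mul_le_mul_of_nonneg_right ht.out.le (stdPhi_pos t).le

lemma stdPhi_div_le_mul_stdTail {x : ℝ} (hx : 0 < x) :
    stdPhi x / x ≤ (1 + x⁻¹ ^ 2) * stdTail x := by
  rw [stdTail, ← integral_const_mul, ← integral_Ioi_one_add_inv_sq_mul_stdPhi hx]
  refine setIntegral_mono_of_nonneg (fun t _ => by have := stdPhi_pos t; positivity)
    (fun t ht => ?_) (integrable_stdPhi.integrableOn.const_mul _)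
  have := stdPhi_pos t
  have := inv_anti₀ hx ht.out.le
  have := (inv_pos.2 (hx.trans ht)).le
  gcongr

noncomputable def millsRatio (F f : ℝ → ℝ) (x : ℝ) : ℝ := x * (1 - F x) / f x

lemma tendsto_millsRatio_stdCdf : Tendsto (millsRatio stdCdf stdPhi) atTop (𝓝 1) := by
  have hlower : Tendsto (fun x : ℝ => (1 + x⁻¹ ^ 2)⁻¹) atTop (𝓝 1) := by
    simpa using (((tendsto_inv_atTop_zero (𝕜 := ℝ)).pow 2).const_add 1).inv₀ (by norm_num)
  refine tendsto_of_tendsto_of_tendsto_of_le_of_le' hlower tendsto_const_nhds ?_ ?_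
  all_goals
    filter_upwards [eventually_gt_atTop 0] with x hx
    rw [millsRatio, one_sub_stdCdf]
  · have h := stdPhi_div_le_mul_stdTail hx
    rw [div_le_iff₀ hx] at h
    rw [le_div_iff₀ (stdPhi_pos x), inv_mul_le_iff₀ (by positivity)]
    exact h.trans_eq (by ring)
  · have h := stdTail_le_stdPhi_div hx
    rw [le_div_iff₀ hx] at h
    rw [div_le_one (stdPhi_pos x), mul_comm]
    exact h

lemma snPdf_nonneg (l x : ℝ) : 0 ≤ snPdf l x := by
  have := stdPhi_pos x
  have := stdCdf_nonneg (l * x)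
  unfold snPdf
  positivity

lemma snPdf_le_two_mul_stdPhi (l x : ℝ) : snPdf l x ≤ 2 * stdPhi x := by
  have := stdPhi_pos x
  have := stdCdf_le_one (l * x)
  unfold snPdf
  nlinarith

lemma snPdf_neg_add_snPdf (l x : ℝ) : snPdf l (-x) + snPdf l x = 2 * stdPhi x := by
  rw [snPdf, snPdf, stdPhi_neg, mul_neg, stdCdf_neg, ← one_sub_stdCdf]
  ring

lemma integrable_snPdf (l : ℝ) : Integrable (snPdf l) := by
  refine (integrable_stdPhi.const_mul 2).mono' ?_ (.of_forall fun x => ?_)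
  · exact ((measurable_stdPhi.const_mul 2).mul
      (monotone_stdCdf.measurable.comp (measurable_const_mul l))).aestronglyMeasurable
  · rw [Real.norm_of_nonneg (snPdf_nonneg l x)]
    exact snPdf_le_two_mul_stdPhi l x

lemma integral_snPdf (l : ℝ) : ∫ x, snPdf l x = 1 := by
  have h := integral_add ((integrable_snPdf l).comp_neg) (integrable_snPdf l)
  simp only [snPdf_neg_add_snPdf, integral_const_mul, integral_stdPhi, integral_neg_eq_self] at h
  linarith

lemma one_sub_snCdf (l x : ℝ) : 1 - snCdf l x = ∫ t in Ioi x, snPdf l t := by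
  rw [snCdf, ← integral_snPdf l, ← intervalIntegral.integral_Iic_add_Ioi
    (integrable_snPdf l).integrableOn (integrable_snPdf l).integrableOn]
  ring

lemma one_sub_snCdf_le (l x : ℝ) : 1 - snCdf l x ≤ 2 * stdTail x := by
  rw [one_sub_snCdf, stdTail, ← integral_const_mul]
  exact setIntegral_mono_of_nonneg (fun t _ => snPdf_nonneg l t)
    (fun t _ => snPdf_le_two_mul_stdPhi l t) (integrable_stdPhi.const_mul 2).integrableOn

lemma le_one_sub_snCdf {l : ℝ} (hl : 0 ≤ l) (x : ℝ) :
    2 * stdCdf (l * x) * stdTail x ≤ 1 - snCdf l x := by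
  rw [one_sub_snCdf, stdTail, ← integral_const_mul]
  refine setIntegral_mono_of_nonneg
    (fun t _ => by have := stdPhi_pos t; have := stdCdf_nonneg (l * x); positivity)
    (fun t ht => ?_) (integrable_snPdf l).integrableOn
  have := stdPhi_pos t
  have := monotone_stdCdf (mul_le_mul_of_nonneg_left ht.out.le hl)
  rw [snPdf]
  nlinarith

lemma millsRatio_stdCdf_le_millsRatio_snCdf {l x : ℝ} (hl : 0 ≤ l) (hx : 0 ≤ x)
    (hc : 0 < stdCdf (l * x)) :
    millsRatio stdCdf stdPhi x ≤ millsRatio (snCdf l) (snPdf l) x := by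
  have := stdPhi_pos x
  calc millsRatio stdCdf stdPhi x = x * (2 * stdCdf (l * x) * stdTail x) / snPdf l x := by
        rw [millsRatio, one_sub_stdCdf, snPdf]
        generalize stdCdf (l * x) = c at hc ⊢
        field_simp
    _ ≤ millsRatio (snCdf l) (snPdf l) x := by
        rw [millsRatio]
        gcongr
        · exact snPdf_nonneg l x
        · exact le_one_sub_snCdf hl x

lemma millsRatio_snCdf_le_millsRatio_stdCdf_div {l x : ℝ} (hx : 0 ≤ x)
    (hc : 0 < stdCdf (l * x)) :
    millsRatio (snCdf l) (snPdf l) x ≤ millsRatio stdCdf stdPhi x / stdCdf (l * x) := by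
  have := stdPhi_pos x
  calc millsRatio (snCdf l) (snPdf l) x ≤ x * (2 * stdTail x) / snPdf l x := by
        rw [millsRatio]
        gcongr
        · exact snPdf_nonneg l x
        · exact one_sub_snCdf_le l x
    _ = millsRatio stdCdf stdPhi x / stdCdf (l * x) := by
        rw [millsRatio, one_sub_stdCdf, snPdf]
        generalize stdCdf (l * x) = c at hc ⊢
        field_simp

theorem skew_normal_mills_ratio_pos (l : ℝ) (hl : 0 < l) :
    Tendsto (fun x : ℝ => x * (1 - snCdf l x) / snPdf l x) atTop (𝓝 1) := by
  have hcdf : Tendsto (fun x => stdCdf (l * x)) atTop (𝓝 1) :=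
    tendsto_stdCdf_atTop.comp (tendsto_id.const_mul_atTop hl)
  have hupper : Tendsto (fun x => millsRatio stdCdf stdPhi x / stdCdf (l * x)) atTop (𝓝 1) := by
    have := tendsto_millsRatio_stdCdf.div hcdf one_ne_zero
    rwa [div_one] at this
  refine tendsto_of_tendsto_of_tendsto_of_le_of_le' tendsto_millsRatio_stdCdf hupper ?_ ?_
  all_goals
    filter_upwards [eventually_ge_atTop 0, hcdf.eventually (lt_mem_nhds one_pos)] with x hx hc
  · exact millsRatio_stdCdf_le_millsRatio_snCdf hl.le hx hc
  · exact millsRatio_snCdf_le_millsRatio_stdCdf_div hx hc
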